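/- arXiv:1502.06131 — 2 statements merged into one kernel-verified Lean document; each statement's English description precedes it below -/
import Mathlib

section
/- Let C be a unimodular simplicial complex on ground set [n]. Then for every face S of C, the link link_S(C) is unimodular. -/
open Finset

/-- A (finite) simplicial complex on ground set `V`: a collection of finite subsets of `V`
closed under taking subsets.  (The empty collection, the void complex, is allowed.) -/
structure SComplex (V : Type) where
  faces : Finset (Finset V)
  down_closed : ∀ s ∈ faces, ∀ t ⊆ s, t ∈ faces

/-- An integer matrix, viewed over `ℚ`, has a rank. -/
noncomputable def intRank {m n : Type} [Fintype n] (A : Matrix m n ℤ) : ℕ :=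
  (A.map ((↑·) : ℤ → ℚ)).rank

/-- An integer matrix `A` of rank `d` is unimodular if there is a nonzero `λ` such that
every `d × d` minor of `A` equals `0`, `λ` or `-λ`. -/
def IntUnimodular {m n : Type} [Fintype m] [Fintype n] (A : Matrix m n ℤ) : Prop :=
  ∃ lam : ℤ, lam ≠ 0 ∧ ∀ (r : Fin (intRank A) → m) (c : Fin (intRank A) → n),
    (A.submatrix r c).det = 0 ∨ (A.submatrix r c).det = lam ∨ (A.submatrix r c).det = -lam

/-- A real matrix `A` of rank `d` is unimodular if there is a nonzero `λ` such that
every `d × d` minor of `A` equals `0`, `λ` or `-λ`. -/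
def RealUnimodular {m n : Type} [Fintype m] [Fintype n] (A : Matrix m n ℝ) : Prop :=
  ∃ lam : ℝ, lam ≠ 0 ∧ ∀ (r : Fin A.rank → m) (c : Fin A.rank → n),
    (A.submatrix r c).det = 0 ∨ (A.submatrix r c).det = lam ∨ (A.submatrix r c).det = -lam

namespace SComplex

variable {V W : Type}

/-- The facets of a simplicial complex: its inclusion-maximal faces. -/
def facets [DecidableEq V] (C : SComplex V) : Finset (Finset V) :=
  C.faces.filter fun F => ∀ G ∈ C.faces, F ⊆ G → F = G

/-- The design matrix `A_{C,d}` of the hierarchical model given by the complex `C` and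
the table dimension vector `d`.  Columns are indexed by tuples `i ∈ ∏ v, [d v]`, rows by
pairs `(F, j)` with `F` a facet and `j ∈ ∏_{v ∈ F} [d v]`; the entry is `1` iff the
restriction of `i` to `F` is `j`. -/
def designMatrixD [DecidableEq V] (C : SComplex V) (d : V → ℕ) :
    Matrix ((F : {F // F ∈ C.facets}) × ((v : {v // v ∈ F.1}) → Fin (d v.1)))
      ((v : V) → Fin (d v)) ℤ :=
  fun r i => if ∀ v : {v // v ∈ r.1.1}, i v.1 = r.2 v then 1 else 0

/-- The binary design matrix `A_C = A_{C,2}`. -/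
def designMatrix [DecidableEq V] (C : SComplex V) := designMatrixD C fun _ => 2

/-- A simplicial complex is unimodular if its binary design matrix is unimodular. -/
def IsUnimodular [DecidableEq V] [Fintype V] (C : SComplex V) : Prop :=
  IntUnimodular (designMatrix C)

/-- The Alexander dual `C* = {S : Sᶜ ∉ C}`. -/
def dual [DecidableEq V] [Fintype V] (C : SComplex V) : SComplex V where
  faces := univ.filter fun s => sᶜ ∉ C.faces
  down_closed := by
    intro s hs t ht
    simp only [mem_filter, mem_univ, true_and] at hs ⊢
    intro h
    exact hs (C.down_closed _ h _ (compl_subset_compl.mpr ht))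

/-- The induced subcomplex of `C` on a vertex subset `A`. -/
def induce [DecidableEq V] (C : SComplex V) (A : Finset V) :
    SComplex {v // v ∈ A} where
  faces := univ.filter fun s => s.map (Function.Embedding.subtype fun v => v ∈ A) ∈ C.faces
  down_closed := by
    intro s hs t ht
    simp only [mem_filter, mem_univ, true_and] at hs ⊢
    exact C.down_closed _ hs _ (map_subset_map.mpr ht)

/-- The link of a set `S` in `C`, as a complex on the ground set `Sᶜ`:
`link_S(C) = {F \ S : F ∈ C, S ⊆ F}`. -/
def link [DecidableEq V] [Fintype V] (C : SComplex V) (S : Finset V) :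
    SComplex {v // v ∈ Sᶜ} where
  faces := univ.filter fun s =>
    s.map (Function.Embedding.subtype fun v => v ∈ Sᶜ) ∪ S ∈ C.faces
  down_closed := by
    intro s hs t ht
    simp only [mem_filter, mem_univ, true_and] at hs ⊢
    exact C.down_closed _ hs _ (union_subset_union_left (map_subset_map.mpr ht))

/-- The minor `link_R(C \ S)` of `C`, a complex on the ground set `(R ∪ S)ᶜ`. -/
def minorAt [DecidableEq V] [Fintype V] (C : SComplex V) (R S : Finset V) :
    SComplex {v // v ∈ (R ∪ S)ᶜ} where
  faces := univ.filter fun s =>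
    s.map (Function.Embedding.subtype fun v => v ∈ (R ∪ S)ᶜ) ∪ R ∈ C.faces
  down_closed := by
    intro s hs t ht
    simp only [mem_filter, mem_univ, true_and] at hs ⊢
    exact C.down_closed _ hs _ (union_subset_union_left (map_subset_map.mpr ht))

/-- Isomorphism of simplicial complexes: a bijection of ground sets carrying faces to faces. -/
def Isomorphic [DecidableEq W] (C : SComplex V) (D : SComplex W) : Prop :=
  ∃ e : V ≃ W, ∀ s : Finset V, s ∈ C.faces ↔ s.image (⇑e) ∈ D.faces

/-- `D` is a minor of `C` if `D` is isomorphic to `link_R(C \ S)` for some face `R` of `C`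
and vertex set `S` disjoint from `R`. -/
def IsMinor [DecidableEq V] [Fintype V] [DecidableEq W] (D : SComplex W) (C : SComplex V) :
    Prop :=
  ∃ R S : Finset V, Disjoint R S ∧ R ∈ C.faces ∧ D.Isomorphic (C.minorAt R S)

/-- The simplicial complex generated by a given collection of sets. -/
def gen [DecidableEq V] [Fintype V] (gens : Finset (Finset V)) : SComplex V where
  faces := univ.filter fun s => ∃ g ∈ gens, s ⊆ g
  down_closed := by
    intro s hs t ht
    simp only [mem_filter, mem_univ, true_and] at hs ⊢
    obtain ⟨g, hg, hsg⟩ := hs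
    exact ⟨g, hg, ht.trans hsg⟩

/-- The cone over `C`: one new vertex (the last one) is added to every face. -/
def cone {n : ℕ} (C : SComplex (Fin n)) : SComplex (Fin (n + 1)) where
  faces := univ.filter fun s => (univ.filter fun v : Fin n => v.castSucc ∈ s) ∈ C.faces
  down_closed := by
    intro s hs t ht
    simp only [mem_filter, mem_univ, true_and] at hs ⊢
    refine C.down_closed _ hs _ ?_
    intro v hv
    simp only [mem_filter, mem_univ, true_and] at hv ⊢
    exact ht hv

/-- Adding one ghost vertex (the last one) to `C`. -/
def ghost {n : ℕ} (C : SComplex (Fin n)) : SComplex (Fin (n + 1)) where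
  faces := univ.filter fun s => Fin.last n ∉ s ∧
    (univ.filter fun v : Fin n => v.castSucc ∈ s) ∈ C.faces
  down_closed := by
    intro s hs t ht
    simp only [mem_filter, mem_univ, true_and] at hs ⊢
    refine ⟨fun h => hs.1 (ht h), C.down_closed _ hs.2 _ ?_⟩
    intro v hv
    simp only [mem_filter, mem_univ, true_and] at hv ⊢
    exact ht hv

/-- The iterated cone `cone^p(C)`. -/
def conePow {n : ℕ} : (p : ℕ) → SComplex (Fin n) → SComplex (Fin (n + p))
  | 0, C => C
  | p + 1, C => cone (conePow p C)

/-- Adding `p` ghost vertices `G^p(C)`. -/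
def ghostPow {n : ℕ} : (p : ℕ) → SComplex (Fin n) → SComplex (Fin (n + p))
  | 0, C => C
  | p + 1, C => ghost (ghostPow p C)

/-- The embedding `Fin n ↪ Fin (n+1)` by `castSucc`. -/
def castSuccEmb' {n : ℕ} : Fin n ↪ Fin (n + 1) :=
  ⟨Fin.castSucc, Fin.castSucc_injective n⟩

/-- The Lawrence lifting `Λ(C)`: its facets are the old ground set `[n]` (a big facet)
together with `F ∪ {n+1}` for each facet `F` of `C`. -/
def lawrence {n : ℕ} (C : SComplex (Fin n)) : SComplex (Fin (n + 1)) :=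
  gen (insert ((univ : Finset (Fin n)).map castSuccEmb')
    (C.facets.image fun F => insert (Fin.last n) (F.map castSuccEmb')))

/-- The disjoint union `Δ_m ⊔ Δ_k` of an `m`-simplex (on the first `m+1` vertices) and
a `k`-simplex (on the remaining `k+1` vertices). -/
def disjSimplices (m k : ℕ) : SComplex (Fin (m + k + 2)) :=
  gen {univ.filter fun x : Fin (m + k + 2) => (x : ℕ) ≤ m,
    univ.filter fun x : Fin (m + k + 2) => m < (x : ℕ)}

/-- The full simplex on `k` vertices (i.e. `Δ_{k-1}`; for `k = 0` this is `Δ_{-1} = {∅}`). -/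
def fullSimplexC (k : ℕ) : SComplex (Fin k) where
  faces := univ
  down_closed := fun _ _ t _ => mem_univ t

/-- The void complex `Δ_{-2} = {}`. -/
def voidC : SComplex (Fin 0) where
  faces := ∅
  down_closed := by simp

/-- `∂Δ_k ⊔ {v}`: the boundary of a `k`-simplex together with one extra disjoint vertex. -/
def bdyDisjPt (k : ℕ) : SComplex (Fin (k + 2)) where
  faces := univ.filter fun s =>
    s ⊂ (univ.filter fun x : Fin (k + 2) => (x : ℕ) < k + 1) ∨ s = {Fin.last (k + 1)}
  down_closed := by
    intro s hs t ht
    simp only [mem_filter, mem_univ, true_and] at hs ⊢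
    rcases hs with hs | rfl
    · exact Or.inl (lt_of_le_of_lt ht hs)
    · rcases Finset.subset_singleton_iff.mp ht with rfl | rfl
      · refine Or.inl (Finset.empty_ssubset.mpr ⟨⟨0, by omega⟩, ?_⟩)
        simp
      · exact Or.inr rfl

/-- The path `P_4` on four vertices. -/
def P4 : SComplex (Fin 4) := gen {{0, 1}, {1, 2}, {2, 3}}

/-- The four-cycle `C_4`. -/
def C4 : SComplex (Fin 4) := gen {{0, 1}, {1, 2}, {2, 3}, {0, 3}}

/-- The boundary of the octahedron, with antipodal vertex pairs `(0,3)`, `(1,4)`, `(2,5)`. -/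
def O6 : SComplex (Fin 6) :=
  gen {{0, 1, 2}, {0, 1, 5}, {0, 4, 2}, {0, 4, 5}, {3, 1, 2}, {3, 1, 5}, {3, 4, 2}, {3, 4, 5}}

/-- The complex `J_1` on five vertices with facets `12, 15, 234, 345`. -/
def J1 : SComplex (Fin 5) := gen {{0, 1}, {0, 4}, {1, 2, 3}, {2, 3, 4}}

/-- The complex `J_2` on five vertices with facets `12, 235, 34, 145`. -/
def J2 : SComplex (Fin 5) := gen {{0, 1}, {1, 2, 4}, {2, 3}, {0, 3, 4}}

/-- The nuclear complexes (on `Fin` ground sets), built from disjoint unions of two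
simplices, duals thereof, and simplices, by repeatedly coning, adding ghost vertices
and taking Lawrence liftings. -/
inductive Nuclear : {n : ℕ} → SComplex (Fin n) → Prop
  | lawrence {n : ℕ} {D : SComplex (Fin n)} : Nuclear D → Nuclear D.lawrence
  | ghost {n : ℕ} {D : SComplex (Fin n)} : Nuclear D → Nuclear D.ghost
  | coneDisj (p m k : ℕ) : Nuclear (conePow p (disjSimplices m k))
  | coneDualDisj (p m k : ℕ) : Nuclear (conePow p (dual (disjSimplices (m + 1) (k + 1))))
  | simplex (k : ℕ) : Nuclear (fullSimplexC k)
  | void : Nuclear voidC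

/-- A complex on an arbitrary ground set is nuclear if it is isomorphic to a nuclear
complex on a `Fin` ground set. -/
def IsNuclear (C : SComplex V) : Prop :=
  ∃ (k : ℕ) (D : SComplex (Fin k)), Nuclear D ∧ C.Isomorphic D

/-- `C` is β-avoiding if no minor of `C` is isomorphic to `P_4`, `O_6`, `O_6*`, `J_1`,
`J_1*`, `J_2`, or `∂Δ_k ⊔ {v}` for some `k ≥ 1`. -/
def BetaAvoiding [DecidableEq V] [Fintype V] (C : SComplex V) : Prop :=
  ¬ IsMinor P4 C ∧ ¬ IsMinor O6 C ∧ ¬ IsMinor (dual O6) C ∧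
  ¬ IsMinor J1 C ∧ ¬ IsMinor (dual J1) C ∧ ¬ IsMinor J2 C ∧
  ∀ k : ℕ, 1 ≤ k → ¬ IsMinor (bdyDisjPt k) C

/-- The 1-skeleton of a complex, as a simple graph. -/
def oneSkeleton [DecidableEq V] (C : SComplex V) : SimpleGraph V where
  Adj u v := u ≠ v ∧ ({u, v} : Finset V) ∈ C.faces
  symm := by
    constructor
    intro u v h
    exact ⟨h.1.symm, by rw [Finset.pair_comm]; exact h.2⟩
  loopless := by
    constructor
    intro u h
    exact h.1 rfl

/-- The non-ghost vertices of `C`: those `v` with `{v}` a face. -/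
def nonGhost [DecidableEq V] [Fintype V] (C : SComplex V) : Finset V :=
  univ.filter fun v => ({v} : Finset V) ∈ C.faces

/-- `S` is a minimal nonface of `C`: not a face, but all proper subsets are faces. -/
def MinNonface (C : SComplex V) (S : Finset V) : Prop :=
  S ∉ C.faces ∧ ∀ t ⊂ S, t ∈ C.faces

end SComplex

/-!
Split the columns `i ∈ {0,1}^n` of `A = A_C` into those with `i|_S = 0`, which correspond to
the columns `i'` of `A_link` via `i = (i', 0)`, and the others, `N`. The row of `A` for the
facet `G ∪ S` and the assignment `(j, 0)` vanishes on `N` and restricts to the row `(G, j)` of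
`A_link`. So a minor of `A` through such rows and a fixed nonsingular maximal minor of `A_N` is
block triangular and factors as a minor of `A_link` times that fixed minor; it is a maximal minor
of `A` once `rank A ≤ rank A_link + rank A_N` (the block minor itself gives `≥`).

That inequality comes from the alternating sum `Δf(i') = ∑_w (-1)^|w| f(i', w)` over the
`S`-coordinates. On functions vanishing on `N` it is restriction to `{i | i|_S = 0}`, and it
sends the indicator of `{i | i|_F = j}` to `±` the indicator of `{i' | i'|_(F \ S) = j}` if
`S ⊆ F` and to `0` otherwise. Hence `f ↦ (Δf, f|_N)` embeds the row space of `A` into the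
product of the row spaces of `A_link` and `A_N`.
-/

theorem Submodule.finrank_le_finrank_add_finrank_of_le_comap {K M N₁ N₂ : Type} [Field K]
    [AddCommGroup M] [Module K M] [AddCommGroup N₁] [Module K N₁] [AddCommGroup N₂] [Module K N₂]
    {V : Submodule K M} {W₁ : Submodule K N₁} {W₂ : Submodule K N₂} [FiniteDimensional K W₁]
    [FiniteDimensional K W₂] (f : M →ₗ[K] N₁) (g : M →ₗ[K] N₂) (hf : V ≤ W₁.comap f)
    (hg : V ≤ W₂.comap g) (hfg : ∀ x ∈ V, f x = 0 → g x = 0 → x = 0) :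
    Module.finrank K V ≤ Module.finrank K W₁ + Module.finrank K W₂ := by
  let φ : V →ₗ[K] W₁ × W₂ := ((f.domRestrict V).codRestrict W₁ fun x => hf x.2).prod
    ((g.domRestrict V).codRestrict W₂ fun x => hg x.2)
  have hφ : Function.Injective φ := by
    rw [← LinearMap.ker_eq_bot, LinearMap.ker_eq_bot']
    intro x hx
    exact Subtype.ext (hfg x x.2 (congrArg (Subtype.val ∘ Prod.fst) hx)
      (congrArg (Subtype.val ∘ Prod.snd) hx))
  rw [← Module.finrank_prod]
  exact LinearMap.finrank_le_finrank_of_injective hφ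

namespace Matrix

variable {m n K : Type} [Field K]

theorem exists_linearIndependent_rows [Finite m] [Fintype n] (A : Matrix m n K) (k : ℕ)
    (hk : A.rank = k) :
    ∃ r : Fin k → m, LinearIndependent K (A.row ∘ r) := by
  obtain ⟨κ, a, ha, hspan, hli⟩ := exists_linearIndependent' K A.row
  have : Finite κ := Finite.of_injective a ha
  have : Fintype κ := Fintype.ofFinite κ
  have hcard : Fintype.card κ = k := by
    rw [← hk, rank_eq_finrank_span_row, ← hspan, ← Set.finrank]
    exact linearIndependent_iff_card_eq_finrank_span.mp hli
  let e : Fin k ≃ κ := (Fintype.equivFinOfCardEq hcard).symm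
  exact ⟨a ∘ e, hli.comp e e.injective⟩

theorem exists_submatrix_det_ne_zero [Fintype m] [Fintype n] (A : Matrix m n K) :
    ∃ r c : Fin A.rank → _, (A.submatrix r c).det ≠ 0 := by
  obtain ⟨r, hr⟩ := A.exists_linearIndependent_rows A.rank rfl
  have hrank : (A.submatrix r id)ᵀ.rank = A.rank := by
    rw [rank_transpose, LinearIndependent.rank_matrix (M := A.submatrix r id) hr, Fintype.card_fin]
  obtain ⟨c, hc⟩ := (A.submatrix r id)ᵀ.exists_linearIndependent_rows A.rank hrank
  refine ⟨r, c, fun h => ?_⟩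
  have hunit : IsUnit (A.submatrix r c)ᵀ := linearIndependent_rows_iff_isUnit.mp hc
  rw [isUnit_iff_isUnit_det, det_transpose, h] at hunit
  exact not_isUnit_zero hunit

theorem det_submatrix_sumElim_of_eq_zero {R ι κ : Type} [CommRing R] [Fintype ι] [DecidableEq ι]
    [Fintype κ] [DecidableEq κ] (A : Matrix m n R) (r₁ : ι → m) (r₂ : κ → m) (c₁ : ι → n)
    (c₂ : κ → n) (h : ∀ i k, A (r₁ i) (c₂ k) = 0) :
    (A.submatrix (Sum.elim r₁ r₂) (Sum.elim c₁ c₂)).det =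
      (A.submatrix r₁ c₁).det * (A.submatrix r₂ c₂).det := by
  have hblocks : A.submatrix (Sum.elim r₁ r₂) (Sum.elim c₁ c₂) =
      fromBlocks (A.submatrix r₁ c₁) 0 (A.submatrix r₂ c₁) (A.submatrix r₂ c₂) := by
    ext (i | i) (j | j) <;> simp [h]
  rw [hblocks, det_fromBlocks_zero₁₂]

end Matrix

section IntUnimodular

variable {m n m' n' : Type}

theorem exists_submatrix_det_ne_zero_of_intRank [Fintype m] [Fintype n] (A : Matrix m n ℤ) :
    ∃ r c : Fin (intRank A) → _, (A.submatrix r c).det ≠ 0 := by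
  obtain ⟨r, c, h⟩ := (A.map ((↑) : ℤ → ℚ)).exists_submatrix_det_ne_zero
  refine ⟨r, c, fun h0 => h ?_⟩
  rw [Matrix.submatrix_map, ← Int.cast_det]
  exact_mod_cast h0

theorem card_le_intRank_of_det_ne_zero [Fintype n] {ι : Type} [Fintype ι] [DecidableEq ι]
    (A : Matrix m n ℤ) (r : ι → m) (c : ι → n) (h : (A.submatrix r c).det ≠ 0) :
    Fintype.card ι ≤ intRank A := by
  have hq : ((A.map ((↑) : ℤ → ℚ)).submatrix r c).det ≠ 0 := by
    rwa [Matrix.submatrix_map, ← Int.cast_det, Int.cast_ne_zero]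
  rw [← Matrix.rank_of_det_ne_zero hq]
  exact Matrix.rank_submatrix_le _ r c

theorem eq_zero_or_eq_or_eq_neg_of_mul {x x₀ w lam : ℤ} (hx₀ : x₀ ≠ 0) (hw : w ≠ 0)
    (h₀ : x₀ * w = 0 ∨ x₀ * w = lam ∨ x₀ * w = -lam) (h : x * w = 0 ∨ x * w = lam ∨ x * w = -lam) :
    x = 0 ∨ x = x₀ ∨ x = -x₀ := by
  have hlam : lam = x₀ * w ∨ lam = -(x₀ * w) := by
    rcases h₀ with h₀ | h₀ | h₀
    · exact absurd h₀ (mul_ne_zero hx₀ hw)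
    · exact Or.inl h₀.symm
    · exact Or.inr (by rw [h₀, neg_neg])
  have hxw : x * w = 0 * w ∨ x * w = x₀ * w ∨ x * w = -x₀ * w := by
    rw [zero_mul, neg_mul]
    rcases hlam with rfl | rfl <;> rcases h with h | h | h <;> simp [h]
  rcases hxw with h | h | h
  exacts [Or.inl (mul_right_cancel₀ hw h), Or.inr (Or.inl (mul_right_cancel₀ hw h)),
    Or.inr (Or.inr (mul_right_cancel₀ hw h))]

theorem IntUnimodular.of_blockTriangular [Fintype m] [Fintype n] [Fintype m'] [Fintype n']
    {A : Matrix m n ℤ} {B : Matrix m' n' ℤ}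
    (hA : IntUnimodular A) (p : n → Prop) [DecidablePred p] (ρ : m' → m) (e : n' → n)
    (hρe : ∀ x y, A (ρ x) (e y) = B x y) (hρp : ∀ x j, p j → A (ρ x) j = 0)
    (hrank : intRank A ≤ intRank B + intRank (A.submatrix id (Subtype.val : Subtype p → n))) :
    IntUnimodular B := by
  obtain ⟨lam, -, hminor⟩ := hA
  set N := A.submatrix id (Subtype.val : Subtype p → n)
  obtain ⟨r₀, c₀, hN⟩ := exists_submatrix_det_ne_zero_of_intRank N
  obtain ⟨r₁, c₁, hB⟩ := exists_submatrix_det_ne_zero_of_intRank B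
  have hdet : ∀ r c : Fin (intRank B) → _,
      (A.submatrix (Sum.elim (ρ ∘ r) r₀) (Sum.elim (e ∘ c) (Subtype.val ∘ c₀))).det =
        (B.submatrix r c).det * (N.submatrix r₀ c₀).det := fun r c => by
    rw [Matrix.det_submatrix_sumElim_of_eq_zero A (ρ ∘ r) r₀ (e ∘ c) (Subtype.val ∘ c₀)
      fun x y => hρp _ _ (c₀ y).2]
    congr 2
    ext x y
    exact hρe _ _
  have hsize : intRank A = intRank B + intRank N := by
    refine le_antisymm hrank ?_
    have := card_le_intRank_of_det_ne_zero A _ _ (hdet r₁ c₁ ▸ mul_ne_zero hB hN)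
    rwa [Fintype.card_sum, Fintype.card_fin, Fintype.card_fin] at this
  have hfactor : ∀ r c : Fin (intRank B) → _, (B.submatrix r c).det * (N.submatrix r₀ c₀).det = 0 ∨
      (B.submatrix r c).det * (N.submatrix r₀ c₀).det = lam ∨
      (B.submatrix r c).det * (N.submatrix r₀ c₀).det = -lam := fun r c => by
    let σ : Fin (intRank A) ≃ Fin (intRank B) ⊕ Fin (intRank N) :=
      (finCongr hsize).trans finSumFinEquiv.symm
    have := hminor (Sum.elim (ρ ∘ r) r₀ ∘ σ) (Sum.elim (e ∘ c) (Subtype.val ∘ c₀) ∘ σ)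
    rwa [← Matrix.submatrix_submatrix, Matrix.det_submatrix_equiv_self, hdet] at this
  exact ⟨_, hB, fun r c => eq_zero_or_eq_or_eq_neg_of_mul hB hN (hfactor r₁ c₁) (hfactor r c)⟩

end IntUnimodular

namespace SComplex

variable {α : Type} [DecidableEq α]

def cylinder (T : Finset α) (k : α → Fin 2) : (α → Fin 2) → ℚ :=
  fun i => if ∀ v ∈ T, i v = k v then 1 else 0

theorem row_designMatrix_eq_cylinder (D : SComplex α) (r) :
    (D.designMatrix.map ((↑) : ℤ → ℚ)).row r =
      cylinder r.1.1 (fun v => if h : v ∈ r.1.1 then r.2 ⟨v, h⟩ else 0) := by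
  ext i
  simp only [Matrix.row, Matrix.map_apply, designMatrix, designMatrixD, cylinder]
  split_ifs <;> simp_all

theorem mem_faces_of_mem_facets (D : SComplex α) {F : Finset α} (hF : F ∈ D.facets) :
    F ∈ D.faces :=
  (mem_filter.1 hF).1

theorem exists_mem_facets_superset (D : SComplex α) {T : Finset α} (hT : T ∈ D.faces) :
    ∃ F ∈ D.facets, T ⊆ F := by
  obtain ⟨F, hTF, hF⟩ := D.faces.exists_le_maximal hT
  refine ⟨F, ?_, hTF⟩
  simp only [facets, mem_filter]
  exact ⟨hF.prop, fun G hG hFG => le_antisymm hFG (hF.2 hG hFG)⟩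

theorem cylinder_mem_span_rows (D : SComplex α) {T : Finset α} (hT : T ∈ D.faces)
    (k : α → Fin 2) :
    cylinder T k ∈ Submodule.span ℚ (Set.range (D.designMatrix.map ((↑) : ℤ → ℚ)).row) := by
  obtain ⟨F, hF, hTF⟩ := D.exists_mem_facets_superset hT
  have hsum : cylinder T k = ∑ j ∈ univ.filter fun j : {v // v ∈ F} → Fin 2 =>
      ∀ v : {v // v ∈ F}, v.1 ∈ T → j v = k v,
      (D.designMatrix.map ((↑) : ℤ → ℚ)).row ⟨⟨F, hF⟩, j⟩ := by
    ext i
    have hrow : ∀ j, (D.designMatrix.map ((↑) : ℤ → ℚ)).row ⟨⟨F, hF⟩, j⟩ i =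
        if (fun v : {v // v ∈ F} => i v) = j then 1 else 0 := fun j => by
      simp [Matrix.row, designMatrix, designMatrixD, funext_iff]
    rw [Finset.sum_apply, sum_congr rfl fun j _ => hrow j, sum_ite_eq]
    simp only [cylinder, mem_filter, mem_univ, true_and, Subtype.forall]
    exact if_congr ⟨fun h v _ hv => h v hv, fun h v hv => h v (hTF hv) hv⟩ rfl rfl
  rw [hsum]
  exact Submodule.sum_mem _ fun j _ => Submodule.subset_span ⟨_, rfl⟩

section Link

variable [Fintype α]

theorem map_subtype_compl_union {S H : Finset α} (hSH : S ⊆ H) :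
    (H.subtype (· ∈ Sᶜ)).map (Function.Embedding.subtype (· ∈ Sᶜ)) ∪ S = H := by
  ext v
  by_cases hv : v ∈ S
  · simp [hv, hSH hv]
  · simp [hv]

theorem subtype_mem_link_faces (C : SComplex α) {S H : Finset α} (hSH : S ⊆ H)
    (hH : H ∈ C.faces) : H.subtype (· ∈ Sᶜ) ∈ (C.link S).faces := by
  simp only [link, mem_filter, mem_univ, true_and]
  rwa [map_subtype_compl_union hSH]

theorem map_union_mem_facets (C : SComplex α) {S : Finset α} {G : Finset {v // v ∈ Sᶜ}}
    (hG : G ∈ (C.link S).facets) :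
    G.map (Function.Embedding.subtype (· ∈ Sᶜ)) ∪ S ∈ C.facets := by
  simp only [facets, link, mem_filter, mem_univ, true_and] at hG ⊢
  refine ⟨hG.1, fun H hH hGH => ?_⟩
  have hSH : S ⊆ H := union_subset_right hGH
  have hG_eq : G = H.subtype (· ∈ Sᶜ) := by
    refine hG.2 _ (by rwa [map_subtype_compl_union hSH]) fun u hu => ?_
    simpa using hGH (mem_union_left _ (mem_map_of_mem _ hu))
  rw [hG_eq, map_subtype_compl_union hSH]

def glue (S : Finset α) (i' : {v // v ∈ Sᶜ} → Fin 2) (w : {v // v ∈ S} → Fin 2) : α → Fin 2 :=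
  fun v => if h : v ∈ S then w ⟨v, h⟩ else i' ⟨v, mem_compl.2 h⟩

theorem glue_restrict_zero {S : Finset α} {i : α → Fin 2} (hi : ∀ v ∈ S, i v = 0) :
    glue S (fun u => i u) 0 = i := by
  ext v
  by_cases hv : v ∈ S <;> simp [glue, hv, hi]

def linkRow (C : SComplex α) (S : Finset α)
    (x : (G : {G // G ∈ (C.link S).facets}) × ((v : {v // v ∈ G.1}) → Fin 2)) :
    (F : {F // F ∈ C.facets}) × ((v : {v // v ∈ F.1}) → Fin 2) :=
  ⟨⟨_, C.map_union_mem_facets x.1.2⟩,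
    fun v => glue S (fun u => if h : u ∈ x.1.1 then x.2 ⟨u, h⟩ else 0) 0 v⟩

theorem designMatrix_linkRow_glue (C : SComplex α) (S : Finset α) (x)
    (i' : {v // v ∈ Sᶜ} → Fin 2) :
    C.designMatrix (linkRow C S x) (glue S i' 0) = (C.link S).designMatrix x i' := by
  simp only [designMatrix, designMatrixD, linkRow, glue]
  refine if_congr ⟨fun h u => ?_, fun h v => ?_⟩ rfl rfl
  · have hu : u.1.1 ∈ x.1.1.map (Function.Embedding.subtype (· ∈ Sᶜ)) ∪ S :=
      mem_union_left _ (mem_map_of_mem _ u.2)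
    simpa [mem_compl.1 u.1.2] using h ⟨_, hu⟩
  · by_cases hvS : v.1 ∈ S
    · simp [hvS]
    · obtain ⟨u, hu, hv⟩ := mem_map.1 ((mem_union.1 v.2).resolve_right hvS)
      simp [← hv, hu, h ⟨u, hu⟩, mem_compl.1 u.2]

theorem designMatrix_linkRow_of_not_forall (C : SComplex α) (S : Finset α) (x)
    {i : α → Fin 2} (hi : ¬ ∀ v ∈ S, i v = 0) : C.designMatrix (linkRow C S x) i = 0 := by
  obtain ⟨v, hvS, hv⟩ := not_forall₂.mp hi
  simp only [designMatrix, designMatrixD]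
  refine if_neg fun h => hv ?_
  simpa [linkRow, glue, hvS] using h ⟨v, mem_union_right _ hvS⟩

def finiteDiff (S : Finset α) : ((α → Fin 2) → ℚ) →ₗ[ℚ] (({v // v ∈ Sᶜ} → Fin 2) → ℚ) where
  toFun f i' := ∑ w : {v // v ∈ S} → Fin 2, (∏ s, (-1 : ℚ) ^ (w s : ℕ)) * f (glue S i' w)
  map_add' f g := by ext; simp [mul_add, sum_add_distrib]
  map_smul' c f := by ext; simp [mul_sum, mul_left_comm]

theorem finiteDiff_apply_of_vanish {S : Finset α} {f : (α → Fin 2) → ℚ}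
    (hf : ∀ i, ¬ (∀ v ∈ S, i v = 0) → f i = 0) (i' : {v // v ∈ Sᶜ} → Fin 2) :
    finiteDiff S f i' = f (glue S i' 0) := by
  refine (sum_eq_single 0 (fun w _ hw => ?_) (by simp)).trans (by simp)
  obtain ⟨s, hs⟩ := Function.ne_iff.mp hw
  rw [hf _ fun h => hs (by simpa [glue] using h s.1 s.2), mul_zero]

theorem finiteDiff_cylinder (S T : Finset α) (k : α → Fin 2) :
    finiteDiff S (cylinder T k) = if S ⊆ T then
      (∏ s : {v // v ∈ S}, (-1 : ℚ) ^ (k s : ℕ)) • cylinder (T.subtype (· ∈ Sᶜ)) (fun u => k u)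
    else 0 := by
  ext i'
  set c := cylinder (T.subtype (· ∈ Sᶜ)) (fun u => k u) i'
  have hsplit : ∀ w, cylinder T k (glue S i' w) =
      c * ∏ s : {v // v ∈ S}, if s.1 ∈ T → w s = k s then 1 else 0 := fun w => by
    have hiff : (∀ v ∈ T, glue S i' w v = k v) ↔
        (∀ u ∈ T.subtype (· ∈ Sᶜ), i' u = k u) ∧ ∀ s : {v // v ∈ S}, s.1 ∈ T → w s = k s := by
      refine ⟨fun h => ⟨fun u hu => ?_, fun s hs => ?_⟩, fun h v hv => ?_⟩
      · simpa [glue, mem_compl.1 u.2] using h u (mem_subtype.1 hu)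
      · simpa [glue, s.2] using h s hs
      · by_cases hvS : v ∈ S
        · simpa [glue, hvS] using h.2 ⟨v, hvS⟩ hv
        · simpa [glue, hvS] using h.1 ⟨v, mem_compl.2 hvS⟩ (mem_subtype.2 hv)
    rw [Fintype.prod_boole, cylinder]
    simp only [hiff]
    split_ifs <;> simp_all [c, cylinder]
  have hsign : ∀ s : {v // v ∈ S}, ∑ b : Fin 2, (-1 : ℚ) ^ (b : ℕ) *
      (if s.1 ∈ T → b = k s then 1 else 0) = if s.1 ∈ T then (-1 : ℚ) ^ (k s : ℕ) else 0 := by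
    intro s
    by_cases hs : s.1 ∈ T
    · generalize k s = b
      fin_cases b <;> simp [hs]
    · simp [hs]
  calc finiteDiff S (cylinder T k) i'
      = c * ∑ w : {v // v ∈ S} → Fin 2, ∏ s, (-1 : ℚ) ^ (w s : ℕ) *
          (if s.1 ∈ T → w s = k s then 1 else 0) := by
        simp only [finiteDiff, LinearMap.coe_mk, AddHom.coe_mk, hsplit, prod_mul_distrib, mul_sum]
        exact sum_congr rfl fun w _ => by ring
    _ = c * ∏ s : {v // v ∈ S}, ∑ b : Fin 2, (-1 : ℚ) ^ (b : ℕ) *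
          (if s.1 ∈ T → b = k s then 1 else 0) := by
        rw [Fintype.prod_sum]
    _ = c * ∏ s : {v // v ∈ S}, if s.1 ∈ T then (-1 : ℚ) ^ (k s : ℕ) else 0 := by
        simp only [hsign]
    _ = _ := by
        have hST : (∀ s : {v // v ∈ S}, s.1 ∈ T) ↔ S ⊆ T :=
          ⟨fun h v hv => h ⟨v, hv⟩, fun h s => h s.2⟩
        rw [Fintype.prod_ite_zero, if_congr hST rfl rfl]
        split_ifs <;> simp [c, mul_comm]

theorem intRank_designMatrix_le (C : SComplex α) (S : Finset α) :
    intRank C.designMatrix ≤ intRank (C.link S).designMatrix + intRank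
      (C.designMatrix.submatrix id (Subtype.val : {i : α → Fin 2 // ¬ ∀ v ∈ S, i v = 0} → _)) := by
  simp only [intRank, Matrix.rank_eq_finrank_span_row]
  refine Submodule.finrank_le_finrank_add_finrank_of_le_comap (finiteDiff S)
    (LinearMap.funLeft ℚ ℚ Subtype.val) ?_ ?_ fun x _ hΔ hπ => ?_
  · refine Submodule.span_le.2 (Set.range_subset_iff.2 fun r => ?_)
    simp only [SetLike.mem_coe, Submodule.mem_comap, row_designMatrix_eq_cylinder,
      finiteDiff_cylinder]
    split_ifs with hS
    · exact Submodule.smul_mem _ _ (cylinder_mem_span_rows _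
        (C.subtype_mem_link_faces hS (C.mem_faces_of_mem_facets r.1.2)) _)
    · exact Submodule.zero_mem _
  · exact Submodule.span_le.2 (Set.range_subset_iff.2 fun r => Submodule.subset_span ⟨r, rfl⟩)
  · have hvanish : ∀ i, ¬ (∀ v ∈ S, i v = 0) → x i = 0 := fun i hi => congrFun hπ ⟨i, hi⟩
    ext i
    by_cases hi : ∀ v ∈ S, i v = 0
    · rw [← glue_restrict_zero hi, ← finiteDiff_apply_of_vanish hvanish, hΔ]
      rfl
    · exact hvanish i hi

theorem IsUnimodular.link {C : SComplex α} (hC : C.IsUnimodular) (S : Finset α) :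
    (C.link S).IsUnimodular :=
  IntUnimodular.of_blockTriangular hC _ (linkRow C S) (fun i' => glue S i' 0)
    (designMatrix_linkRow_glue C S) (fun x _ => designMatrix_linkRow_of_not_forall C S x)
    (intRank_designMatrix_le C S)

end Link

end SComplex

theorem link_isUnimodular_general {n : ℕ} (C : SComplex (Fin n)) (hC : C.IsUnimodular)
    (S : Finset (Fin n)) :
    (C.link S).IsUnimodular :=
  hC.link S

/-- If `C` is a unimodular simplicial complex on `[n]`, then for every face `S` of `C`
the link of `S` in `C` is unimodular. -/
theorem link_isUnimodular {n : ℕ} (C : SComplex (Fin n)) (hC : C.IsUnimodular)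
    (S : Finset (Fin n)) (hS : S ∈ C.faces) :
    (C.link S).IsUnimodular :=
  link_isUnimodular_general C hC S
end

section
/- Let C be a simplicial complex on ground set [n]. For a minimal nonface S of C, a tuple i ∈ {0,1}^{[n]∖S}, and a tuple j ∈ {0,1}^S, let e_{i,j} ∈ ℝ^{{0,1}^n} denote the standard basis vector supported on the unique tuple k ∈ {0,1}^n agreeing with j on S and with i on [n]∖S. Then the set of vectors { Σ_{j ∈ {0,1}^S} (−1)^{‖j‖₁} e_{i,j} : S a minimal nonface of C, i ∈ {0,1}^{[n]∖S} }, where ‖j‖₁ is the number of coordinates of j equal to 1, spans the kernel of the linear map ℝ^{{0,1}^n} → ℝ^{rows} given by the matrix A_C. -/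
open Finset

/-! The Walsh characters `χ_T(k) = ∏_{v ∈ T} (-1)^{k_v}`, `T ⊆ [n]`, form an orthogonal basis
of `ℝ^{{0,1}^n}`. For a face `T` inside a facet `F`, `χ_T(k)` depends only on `k|_F`, so it is a
combination of the rows of `A_C` indexed by `F`; hence a kernel vector is orthogonal to every
`χ_T` with `T` a face, and its Walsh expansion involves only nonfaces `T`. If `S ⊆ T` is a minimal
nonface, `χ_T` is a combination of the vectors attached to `S`, which are `χ_S` restricted to the
fibres `k|_{[n] ∖ S} = i`. Conversely such a vector is killed by each row `(F, j)`: flipping a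
coordinate in `S ∖ F` fixes the row and negates `χ_S`. -/

section Walsh

variable {V : Type}

noncomputable def walsh (T : Finset V) (k : V → Fin 2) : ℝ :=
  ∏ v ∈ T, (-1) ^ (k v : ℕ)

lemma neg_one_pow_val_add_one (a : Fin 2) :
    (-1 : ℝ) ^ ((a + 1 : Fin 2) : ℕ) = -(-1) ^ (a : ℕ) := by
  fin_cases a <;> norm_num [show ((1 + 1 : Fin 2) : ℕ) = 0 from rfl]

lemma neg_one_pow_val_mul_add_one (a b : Fin 2) :
    (-1 : ℝ) ^ (a : ℕ) * (-1) ^ (b : ℕ) + 1 = if a = b then 2 else 0 := by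
  fin_cases a <;> fin_cases b <;> norm_num

lemma neg_one_pow_card_filter_eq_walsh [Fintype V] (k : V → Fin 2) :
    (-1 : ℝ) ^ (univ.filter fun v => k v = 1).card = walsh univ k := by
  rw [walsh, prod_pow_eq_pow_sum, card_filter]
  refine congrArg _ (sum_congr rfl fun v _ => ?_)
  generalize k v = a
  fin_cases a <;> rfl

lemma walsh_subtype (T : Finset V) (p : V → Prop) [DecidablePred p] (hT : ∀ v ∈ T, p v)
    (k : V → Fin 2) : walsh (T.subtype p) (fun v => k v) = walsh T k :=
  prod_subtype_of_mem (fun v => (-1 : ℝ) ^ (k v : ℕ)) hT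

lemma walsh_mul_walsh_sdiff [DecidableEq V] {S T : Finset V} (h : S ⊆ T) (k : V → Fin 2) :
    walsh (T \ S) k * walsh S k = walsh T k :=
  prod_sdiff h

lemma walsh_add_single [DecidableEq V] {T : Finset V} {v₀ : V} (hv₀ : v₀ ∈ T)
    (k : V → Fin 2) :
    walsh T (k + Pi.single v₀ 1) = -walsh T k := by
  rw [walsh, walsh, ← mul_prod_erase T _ hv₀, ← mul_prod_erase T _ hv₀,
    prod_congr rfl fun v hv => by rw [Pi.add_apply, Pi.single_eq_of_ne (ne_of_mem_erase hv),
      add_zero]]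
  simp [neg_one_pow_val_add_one]

lemma sum_mul_walsh_eq_zero [Fintype V] [DecidableEq V] {S : Finset V} {v₀ : V} (hv₀ : v₀ ∈ S)
    (f : (V → Fin 2) → ℝ) (hf : ∀ k, f (k + Pi.single v₀ 1) = f k) :
    ∑ k, f k * walsh S k = 0 := by
  have h := Equiv.sum_comp (Equiv.addRight (Pi.single (M := fun _ => Fin 2) v₀ 1))
    fun k => f k * walsh S k
  simp only [Equiv.coe_addRight, hf, walsh_add_single hv₀, mul_neg, sum_neg_distrib] at h
  linarith

lemma sum_walsh_mul_walsh [Fintype V] [DecidableEq V] (k k' : V → Fin 2) :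
    ∑ T : Finset V, walsh T k * walsh T k' = if k = k' then 2 ^ Fintype.card V else 0 := by
  simp_rw [walsh, ← prod_mul_distrib]
  rw [← powerset_univ, ← prod_add_one]
  simp_rw [neg_one_pow_val_mul_add_one]
  split_ifs with h
  · simp [h]
  · obtain ⟨v, hv⟩ := Function.ne_iff.mp h
    exact prod_eq_zero (mem_univ v) (if_neg hv)

lemma eq_sum_walsh_smul [Fintype V] [DecidableEq V] (x : (V → Fin 2) → ℝ) :
    x = ∑ T : Finset V, ((2 ^ Fintype.card V)⁻¹ * ∑ k, walsh T k * x k) • walsh T := by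
  funext k
  have hexpand : ∑ T : Finset V, (∑ k', walsh T k' * x k') * walsh T k
      = 2 ^ Fintype.card V * x k := by
    simp_rw [sum_mul]
    rw [sum_comm]
    simp_rw [mul_right_comm _ (x _), mul_comm (walsh _ _) (walsh _ k), ← sum_mul,
      sum_walsh_mul_walsh, ite_mul, zero_mul, sum_ite_eq, if_pos (mem_univ _)]
  simp only [Finset.sum_apply, Pi.smul_apply, smul_eq_mul, mul_assoc]
  rw [← mul_sum, hexpand, inv_mul_cancel_left₀ (by positivity)]

lemma restrict_add_single [DecidableEq V] {p : V → Prop} {v₀ : V} (hv₀ : ¬p v₀)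
    (k : V → Fin 2) :
    (fun v : Subtype p => (k + Pi.single v₀ 1 : V → Fin 2) v.1) = fun v : Subtype p => k v :=
  funext fun v => by
    rw [Pi.add_apply, Pi.single_eq_of_ne (by rintro rfl; exact hv₀ v.2), add_zero]

end Walsh

namespace SComplex

variable {V : Type}

lemma exists_mem_facets_superset_s10 [DecidableEq V] (C : SComplex V) {T : Finset V}
    (hT : T ∈ C.faces) : ∃ F ∈ C.facets, T ⊆ F := by
  obtain ⟨F, hF, hmax⟩ := (C.faces.filter (T ⊆ ·)).exists_max_image card ⟨T, by simp [hT]⟩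
  rw [mem_filter] at hF
  refine ⟨F, mem_filter.mpr ⟨hF.1, fun G hG hFG => ?_⟩, hF.2⟩
  exact eq_of_subset_of_card_le hFG (hmax G (mem_filter.mpr ⟨hG, hF.2.trans hFG⟩))

lemma exists_minNonface_subset (C : SComplex V) {T : Finset V} (hT : T ∉ C.faces) :
    ∃ S ⊆ T, C.MinNonface S := by
  induction T using Finset.strongInduction with
  | _ T ih =>
    by_cases h : ∀ t ⊂ T, t ∈ C.faces
    · exact ⟨T, subset_rfl, hT, h⟩
    · push Not at h
      obtain ⟨t, htT, ht⟩ := h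
      obtain ⟨S, hSt, hS⟩ := ih t htT ht
      exact ⟨S, hSt.trans htT.subset, hS⟩

lemma mem_faces_of_mem_facets_s10 [DecidableEq V] (C : SComplex V) {F : Finset V}
    (hF : F ∈ C.facets) : F ∈ C.faces := by
  simp only [facets, mem_filter] at hF
  exact hF.1

lemma designMatrix_map_apply [DecidableEq V] (C : SComplex V) (r) (k : V → Fin 2) :
    C.designMatrix.map ((↑·) : ℤ → ℝ) r k =
      if (fun v : {v // v ∈ r.1.1} => k v) = r.2 then 1 else 0 := by
  simp [designMatrix, designMatrixD, funext_iff, apply_ite]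

variable [Fintype V] [DecidableEq V]

lemma sum_mul_eq_zero_of_mem_ker (C : SComplex V) {x : (V → Fin 2) → ℝ}
    (hx : x ∈ LinearMap.ker (C.designMatrix.map ((↑·) : ℤ → ℝ)).mulVecLin)
    {F : Finset V} (hF : F ∈ C.facets) (g : ({v // v ∈ F} → Fin 2) → ℝ) :
    ∑ k, g (fun v => k v) * x k = 0 := by
  have hrow (j : {v // v ∈ F} → Fin 2) :
      ∑ k, C.designMatrix.map ((↑·) : ℤ → ℝ) ⟨⟨F, hF⟩, j⟩ k * x k = 0 :=
    congrFun hx ⟨⟨F, hF⟩, j⟩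
  have hg (k : V → Fin 2) :
      g (fun v => k v) = ∑ j, g j * C.designMatrix.map ((↑·) : ℤ → ℝ) ⟨⟨F, hF⟩, j⟩ k := by
    simp only [designMatrix_map_apply, mul_ite, mul_one, mul_zero, sum_ite_eq, mem_univ, if_true]
  simp_rw [hg, sum_mul, mul_assoc]
  rw [sum_comm]
  simp only [← mul_sum, hrow, mul_zero, sum_const_zero]

lemma sum_walsh_mul_eq_zero_of_mem_ker (C : SComplex V) {x : (V → Fin 2) → ℝ}
    (hx : x ∈ LinearMap.ker (C.designMatrix.map ((↑·) : ℤ → ℝ)).mulVecLin)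
    {T : Finset V} (hT : T ∈ C.faces) : ∑ k, walsh T k * x k = 0 := by
  obtain ⟨F, hF, hTF⟩ := C.exists_mem_facets_superset_s10 hT
  simpa only [walsh_subtype T _ hTF] using
    C.sum_mul_eq_zero_of_mem_ker hx hF (walsh (T.subtype (· ∈ F)))

lemma eq_dite_mem_iff (S : Finset V) (j : {v // v ∈ S} → Fin 2) (i : {v // v ∈ Sᶜ} → Fin 2)
    (k : V → Fin 2) :
    k = (fun v => if h : v ∈ S then j ⟨v, h⟩ else i ⟨v, mem_compl.mpr h⟩) ↔
      (fun v : {v // v ∈ S} => k v) = j ∧ (fun v : {v // v ∈ Sᶜ} => k v) = i := by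
  constructor
  · rintro rfl
    exact ⟨funext fun v => dif_pos v.2, funext fun v => dif_neg (mem_compl.mp v.2)⟩
  · rintro ⟨rfl, rfl⟩
    funext v
    split_ifs <;> rfl

noncomputable def fiberWalsh (S : Finset V) (i : {v // v ∈ Sᶜ} → Fin 2) (k : V → Fin 2) : ℝ :=
  if (fun v : {v // v ∈ Sᶜ} => k v) = i then walsh S k else 0

lemma fiberWalsh_mem_ker (C : SComplex V) {S : Finset V} (hS : S ∉ C.faces)
    (i : {v // v ∈ Sᶜ} → Fin 2) :
    fiberWalsh S i ∈ LinearMap.ker (C.designMatrix.map ((↑·) : ℤ → ℝ)).mulVecLin := by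
  ext ⟨⟨F, hF⟩, j⟩
  obtain ⟨v₀, hv₀S, hv₀F⟩ : ∃ v₀ ∈ S, v₀ ∉ F :=
    not_subset.mp fun hSF => hS (C.down_closed F (C.mem_faces_of_mem_facets_s10 hF) S hSF)
  have hv₀Sc : ¬v₀ ∈ Sᶜ := notMem_compl.mpr hv₀S
  simp only [Matrix.mulVecLin_apply, Matrix.mulVec, dotProduct,
    designMatrix_map_apply, fiberWalsh, Pi.zero_apply, mul_ite, mul_zero, ← ite_zero_mul]
  exact sum_mul_walsh_eq_zero hv₀S _ fun k => by
    simp only [restrict_add_single hv₀Sc, restrict_add_single hv₀F]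

lemma walsh_eq_sum_smul_fiberWalsh {S T : Finset V} (hST : S ⊆ T) :
    walsh T = ∑ i, walsh ((T \ S).subtype (· ∈ Sᶜ)) i • fiberWalsh S i := by
  funext k
  have hTS : ∀ v ∈ T \ S, v ∈ Sᶜ := fun v hv => mem_compl.mpr (mem_sdiff.mp hv).2
  simp only [Finset.sum_apply, Pi.smul_apply, smul_eq_mul, fiberWalsh, mul_ite, mul_zero,
    sum_ite_eq, mem_univ, if_true, walsh_subtype _ _ hTS, walsh_mul_walsh_sdiff hST]

lemma sum_neg_one_pow_smul_eq_fiberWalsh (S : Finset V) (i : {v // v ∈ Sᶜ} → Fin 2) :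
    ∑ j : {v // v ∈ S} → Fin 2,
      ((-1 : ℝ) ^ (univ.filter fun v => j v = 1).card) •
        (fun k : V → Fin 2 =>
          if k = (fun v => if h : v ∈ S then j ⟨v, h⟩ else i ⟨v, mem_compl.mpr h⟩)
          then (1 : ℝ) else 0) = fiberWalsh S i := by
  funext k
  have hsign : (-1 : ℝ) ^ (univ.filter fun v : {v // v ∈ S} => k v = 1).card = walsh S k := by
    rw [neg_one_pow_card_filter_eq_walsh (fun v : {v // v ∈ S} => k v), walsh, walsh,
      ← prod_coe_sort S]
  simp only [Finset.sum_apply, Pi.smul_apply, smul_eq_mul, mul_ite, mul_one, mul_zero,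
    fiberWalsh, eq_dite_mem_iff, ite_and, sum_ite_eq, mem_univ, if_true, hsign]

end SComplex

open SComplex in
/-- The vectors `∑_{j ∈ {0,1}^S} (-1)^{‖j‖₁} e_{i,j}`, for `S` a minimal nonface of `C`
and `i ∈ {0,1}^{[n]∖S}`, span the kernel of the linear map given by the binary design
matrix `A_C`.  Here `e_{i,j}` is the standard basis vector supported on the unique tuple
agreeing with `j` on `S` and with `i` on `[n]∖S`, and `‖j‖₁` counts the coordinates of
`j` equal to `1`. -/
theorem span_minNonface_vectors_eq_ker {n : ℕ} (C : SComplex (Fin n)) :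
    Submodule.span ℝ
      { w : ((v : Fin n) → Fin 2) → ℝ |
        ∃ S : Finset (Fin n), C.MinNonface S ∧
          ∃ i : {v // v ∈ Sᶜ} → Fin 2,
            w = ∑ j : {v // v ∈ S} → Fin 2,
              ((-1 : ℝ) ^ (Finset.univ.filter fun v => j v = 1).card) •
                (fun k : (v : Fin n) → Fin 2 =>
                  if k = (fun v : Fin n =>
                      if h : v ∈ S then j ⟨v, h⟩ else i ⟨v, Finset.mem_compl.mpr h⟩)
                  then (1 : ℝ) else 0) }
      = LinearMap.ker (Matrix.mulVecLin ((C.designMatrix).map ((↑·) : ℤ → ℝ))) := by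
  simp_rw [sum_neg_one_pow_smul_eq_fiberWalsh]
  refine le_antisymm (Submodule.span_le.mpr ?_) fun x hx => ?_
  · rintro _ ⟨S, hS, i, rfl⟩
    exact C.fiberWalsh_mem_ker hS.1 i
  · rw [eq_sum_walsh_smul x]
    refine Submodule.sum_mem _ fun T _ => ?_
    by_cases hT : T ∈ C.faces
    · simp [C.sum_walsh_mul_eq_zero_of_mem_ker hx hT]
    obtain ⟨S, hST, hS⟩ := C.exists_minNonface_subset hT
    rw [walsh_eq_sum_smul_fiberWalsh hST]
    refine Submodule.smul_mem _ _ (Submodule.sum_mem _ fun i _ => Submodule.smul_mem _ _ ?_)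
    exact Submodule.subset_span ⟨S, hS, i, rfl⟩
end
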